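/- arXiv:2510.26326 — 2 statements merged into one kernel-verified Lean document; each statement's English description precedes it below -/
import Mathlib

section
/- For p ≥ 1 and −1 ≤ α, β ≤ 1, the minimum of tr(C_{z,p} Π) over all positive semidefinite Π ∈ M₄(ℂ) with trace 1, partial trace over the second factor equal to (1/2)[[1,β],[β,1]] and partial trace over the first factor equal to (1/2)[[1,α],[α,1]], equals 2^{p−1}(1 − √(1 − max(α²,β²))), where C_{z,p} = diag(0, 2^p, 2^p, 0). -/
/-
Write s for the (1,1) entry of a coupling Π. The marginal constraints force Π₀₀ = Π₃₃ = 1/2 - s and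
Π₂₂ = s, so the cost is 2^{p+1} s, while α/2 = Π₀₁ + Π₂₃ and β/2 = Π₀₂ + Π₁₃. Positivity bounds
each of these four entries by √(s (1/2 - s)), hence max(α², β²) ≤ 16 s (1/2 - s), which rearranges
to 4s ≥ 1 - √(1 - max(α², β²)).
If |β| ≤ |α|, equality is attained by the mixture ((1+t)/2) w₊w₊ᵀ + ((1-t)/2) w₋w₋ᵀ with t = β/α of
the rank-one couplings w± = (a, b, ±b, ±a), where a² + b² = 1/2, 4ab = α and 4b² = 1 - √(1 - α²);
swapping the two tensor factors covers |α| < |β|.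
-/

open Matrix
open scoped ComplexOrder

noncomputable section

/-- Partial trace over the second tensor factor of `M₄(ℂ) ≅ M₂(ℂ) ⊗ M₂(ℂ)`
(index ordering `(i,k) ↦ 2*i + k`). -/
def ptrace2 (A : Matrix (Fin 4) (Fin 4) ℂ) : Matrix (Fin 2) (Fin 2) ℂ :=
  !![A 0 0 + A 1 1, A 0 2 + A 1 3; A 2 0 + A 3 1, A 2 2 + A 3 3]

/-- Partial trace over the first tensor factor. -/
def ptrace1 (A : Matrix (Fin 4) (Fin 4) ℂ) : Matrix (Fin 2) (Fin 2) ℂ :=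
  !![A 0 0 + A 2 2, A 0 1 + A 2 3; A 1 0 + A 3 2, A 1 1 + A 3 3]

/-- Kronecker product `M₂(ℂ) × M₂(ℂ) → M₄(ℂ)` with index ordering `(i,k) ↦ 2*i + k`. -/
def kron (A B : Matrix (Fin 2) (Fin 2) ℂ) : Matrix (Fin 4) (Fin 4) ℂ :=
  !![A 0 0 * B 0 0, A 0 0 * B 0 1, A 0 1 * B 0 0, A 0 1 * B 0 1;
     A 0 0 * B 1 0, A 0 0 * B 1 1, A 0 1 * B 1 0, A 0 1 * B 1 1;
     A 1 0 * B 0 0, A 1 0 * B 0 1, A 1 1 * B 0 0, A 1 1 * B 0 1;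
     A 1 0 * B 1 0, A 1 0 * B 1 1, A 1 1 * B 1 0, A 1 1 * B 1 1]

def σx : Matrix (Fin 2) (Fin 2) ℂ := !![0, 1; 1, 0]
def σy : Matrix (Fin 2) (Fin 2) ℂ := !![0, -Complex.I; Complex.I, 0]
def σz : Matrix (Fin 2) (Fin 2) ℂ := !![1, 0; 0, -1]

/-- The symmetric cost operator `C_{symm,p}`. -/
def Csymm (p : ℝ) : Matrix (Fin 4) (Fin 4) ℂ :=
  !![(((2:ℝ)^p : ℝ) : ℂ), 0, 0, -(((2:ℝ)^p : ℝ) : ℂ);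
     0, (((2:ℝ)^(p+1) : ℝ) : ℂ), 0, 0;
     0, 0, (((2:ℝ)^(p+1) : ℝ) : ℂ), 0;
     -(((2:ℝ)^p : ℝ) : ℂ), 0, 0, (((2:ℝ)^p : ℝ) : ℂ)]

/-- The single-observable cost operator `C_{z,p} = diag(0, 2^p, 2^p, 0)`. -/
def Cz (p : ℝ) : Matrix (Fin 4) (Fin 4) ℂ :=
  !![0, 0, 0, 0;
     0, (((2:ℝ)^p : ℝ) : ℂ), 0, 0;
     0, 0, (((2:ℝ)^p : ℝ) : ℂ), 0;
     0, 0, 0, 0]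

theorem Matrix.PosSemidef.norm_apply_sq_le {n 𝕜 : Type*} [Fintype n] [RCLike 𝕜]
    {A : Matrix n n 𝕜} (hA : A.PosSemidef) (i j : n) :
    ‖A i j‖ ^ 2 ≤ RCLike.re (A i i) * RCLike.re (A j j) := by
  have hdet := (hA.submatrix ![i, j]).det_nonneg
  have hji : A j i = starRingEnd 𝕜 (A i j) := by
    simpa using (congrFun (congrFun hA.isHermitian j) i).symm
  rw [det_fin_two] at hdet
  simp only [submatrix_apply, cons_val_zero, cons_val_one, hji, RCLike.mul_conj] at hdet
  rw [← hA.isHermitian.coe_re_apply_self i, ← hA.isHermitian.coe_re_apply_self j,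
    sub_nonneg] at hdet
  exact_mod_cast hdet

theorem posSemidef_vecMulVec_ofReal {n : Type*} [Fintype n] (v : n → ℝ) :
    (vecMulVec (fun i ↦ (v i : ℂ)) (fun i ↦ (v i : ℂ))).PosSemidef := by
  have hstar : star (fun i ↦ (v i : ℂ)) = fun i ↦ (v i : ℂ) := by
    funext i
    simp
  simpa only [hstar] using posSemidef_vecMulVec_self_star (fun i ↦ (v i : ℂ))

theorem sq_norm_add_le_four_mul {E : Type*} [SeminormedAddGroup E] {x y : E} {c : ℝ}
    (hx : ‖x‖ ^ 2 ≤ c) (hy : ‖y‖ ^ 2 ≤ c) : ‖x + y‖ ^ 2 ≤ 4 * c := by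
  have := norm_add_le x y
  nlinarith [norm_nonneg (x + y), sq_nonneg (‖x‖ - ‖y‖)]

theorem one_sub_sqrt_one_sub_le {m u : ℝ} (h : m ≤ u * (2 - u)) : 1 - √(1 - m) ≤ u := by
  have : |1 - u| ≤ √(1 - m) := Real.abs_le_sqrt (by nlinarith)
  linarith [le_abs_self (1 - u)]

-- ρ(a) = (I + a σₓ) / 2
def qubitState (a : ℝ) : Matrix (Fin 2) (Fin 2) ℂ := (1/2 : ℂ) • !![1, (a : ℂ); (a : ℂ), 1]

structure IsCoupling_s10 (α β : ℝ) (P : Matrix (Fin 4) (Fin 4) ℂ) : Prop where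
  posSemidef : P.PosSemidef
  trace_eq_one : P.trace = 1
  ptrace2_eq : ptrace2 P = qubitState β
  ptrace1_eq : ptrace1 P = qubitState α

theorem trace_Cz_mul (p : ℝ) (P : Matrix (Fin 4) (Fin 4) ℂ) :
    (Cz p * P).trace = ((2:ℝ)^p : ℝ) * (P 1 1 + P 2 2) := by
  simp only [Matrix.trace, Matrix.diag, Matrix.mul_apply, Fin.sum_univ_four, Cz]
  simp [mul_add]

theorem max_sq_le_of_marginals {α β : ℝ} {P : Matrix (Fin 4) (Fin 4) ℂ} (hP : P.PosSemidef)
    (h2 : ptrace2 P = qubitState β) (h1 : ptrace1 P = qubitState α) :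
    max (α ^ 2) (β ^ 2) ≤ 2 * (P 1 1 + P 2 2).re * (2 - 2 * (P 1 1 + P 2 2).re) := by
  have h00 : P 0 0 + P 1 1 = 1/2 := by simpa [ptrace2, qubitState] using congrFun (congrFun h2 0) 0
  have h02 : P 0 2 + P 1 3 = (β/2 : ℝ) := by
    simpa [ptrace2, qubitState, div_eq_inv_mul] using congrFun (congrFun h2 0) 1
  have h00' : P 0 0 + P 2 2 = 1/2 := by simpa [ptrace1, qubitState] using congrFun (congrFun h1 0) 0
  have h11' : P 1 1 + P 3 3 = 1/2 := by simpa [ptrace1, qubitState] using congrFun (congrFun h1 1) 1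
  have h01 : P 0 1 + P 2 3 = (α/2 : ℝ) := by
    simpa [ptrace1, qubitState, div_eq_inv_mul] using congrFun (congrFun h1 0) 1
  set s := (P 1 1).re
  have re_eq (z w : ℂ) (h : z + w = 1/2) : z.re = 1/2 - w.re := by
    have := congrArg Complex.re h
    simp only [Complex.add_re, Complex.div_ofNat_re, Complex.one_re] at this
    linarith
  have r0 : (P 0 0).re = 1/2 - s := re_eq _ _ h00
  have r2 : (P 2 2).re = s := by linarith [re_eq _ _ h00']
  have r3 : (P 3 3).re = 1/2 - s := by linarith [re_eq _ _ h11']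
  have bound : ∀ i j, ‖P i j‖ ^ 2 ≤ (P i i).re * (P j j).re := hP.norm_apply_sq_le
  have hα : ‖P 0 1 + P 2 3‖ ^ 2 ≤ 4 * (s * (1/2 - s)) := sq_norm_add_le_four_mul
    ((bound 0 1).trans_eq (by rw [r0]; ring)) ((bound 2 3).trans_eq (by rw [r2, r3]))
  have hβ : ‖P 0 2 + P 1 3‖ ^ 2 ≤ 4 * (s * (1/2 - s)) := sq_norm_add_le_four_mul
    ((bound 0 2).trans_eq (by rw [r0, r2]; ring)) ((bound 1 3).trans_eq (by rw [r3]))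
  rw [h01, Complex.norm_real, Real.norm_eq_abs, sq_abs] at hα
  rw [h02, Complex.norm_real, Real.norm_eq_abs, sq_abs] at hβ
  rw [Complex.add_re, r2]
  exact max_le (by linarith) (by linarith)

def couplingPlus (a b t : ℝ) : Matrix (Fin 4) (Fin 4) ℂ :=
  ((1 + t) / 2 : ℝ) • vecMulVec ![(a : ℂ), b, b, a] ![(a : ℂ), b, b, a] +
    ((1 - t) / 2 : ℝ) • vecMulVec ![(a : ℂ), b, -b, -a] ![(a : ℂ), b, -b, -a]

theorem isCoupling_couplingPlus {a b t α β : ℝ} (hab : a ^ 2 + b ^ 2 = 1/2) (hα : 4 * a * b = α)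
    (hβ : t * α = β) (ht : |t| ≤ 1) : IsCoupling_s10 α β (couplingPlus a b t) := by
  have hab' : (a : ℂ) ^ 2 + (b : ℂ) ^ 2 = 1/2 := by
    have := congrArg ((↑) : ℝ → ℂ) hab
    push_cast at this
    exact this
  have hα' : 4 * (a : ℂ) * b = α := by exact_mod_cast hα
  have hβ' : (t : ℂ) * α = β := by exact_mod_cast hβ
  obtain ⟨ht₁, ht₂⟩ := abs_le.mp ht
  refine ⟨?_, ?_, ?_, ?_⟩
  · refine .add (.smul ?_ (by linarith)) (.smul ?_ (by linarith))
    · convert posSemidef_vecMulVec_ofReal ![a, b, b, a] using 2 <;> ext i <;> fin_cases i <;> rfl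
    · convert posSemidef_vecMulVec_ofReal ![a, b, -b, -a] using 2 <;> ext i <;> fin_cases i <;> simp
  · simp [couplingPlus, Matrix.trace, Fin.sum_univ_four]
    linear_combination 2 * hab'
  · ext i j
    fin_cases i <;> fin_cases j <;> simp [ptrace2, qubitState, couplingPlus] <;>
      first | linear_combination hab' | linear_combination (t / 2) * hα' + hβ' / 2
  · ext i j
    fin_cases i <;> fin_cases j <;> simp [ptrace1, qubitState, couplingPlus] <;>
      first | linear_combination hab' | linear_combination hα' / 2

theorem trace_Cz_mul_couplingPlus (p a b t : ℝ) :
    (Cz p * couplingPlus a b t).trace = ((2:ℝ)^p * (2 * b ^ 2) : ℝ) := by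
  rw [trace_Cz_mul, Complex.ofReal_mul]
  congr 1
  simp [couplingPlus]
  ring

theorem exists_sq_add_sq_eq_half {α : ℝ} (hα : |α| ≤ 1) :
    ∃ a b : ℝ, a ^ 2 + b ^ 2 = 1/2 ∧ 4 * a * b = α ∧ 4 * b ^ 2 = 1 - √(1 - α ^ 2) := by
  set q := √(1 - α ^ 2)
  have hq : q ^ 2 = 1 - α ^ 2 := Real.sq_sqrt (by nlinarith [sq_le_one_iff_abs_le_one α |>.mpr hα])
  have hr : √(1 + q) ^ 2 = 1 + q := Real.sq_sqrt (by positivity)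
  have hr0 : 0 < √(1 + q) := Real.sqrt_pos.mpr (by positivity)
  refine ⟨√(1 + q) / 2, α / (2 * √(1 + q)), ?_, ?_, ?_⟩
  · field_simp
    linear_combination (√(1 + q) ^ 2 + q - 1) * hr + hq
  · field_simp
    ring
  · field_simp
    linear_combination -4 * (1 - q) * hr + 4 * hq

def swapFactors (P : Matrix (Fin 4) (Fin 4) ℂ) : Matrix (Fin 4) (Fin 4) ℂ :=
  P.submatrix (Equiv.swap 1 2) (Equiv.swap 1 2)

theorem ptrace1_swapFactors (P : Matrix (Fin 4) (Fin 4) ℂ) :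
    ptrace1 (swapFactors P) = ptrace2 P := by
  ext i j
  fin_cases i <;> fin_cases j <;> simp [ptrace1, ptrace2, swapFactors, Equiv.swap_apply_def]

theorem ptrace2_swapFactors (P : Matrix (Fin 4) (Fin 4) ℂ) :
    ptrace2 (swapFactors P) = ptrace1 P := by
  ext i j
  fin_cases i <;> fin_cases j <;> simp [ptrace1, ptrace2, swapFactors, Equiv.swap_apply_def]

theorem trace_swapFactors (P : Matrix (Fin 4) (Fin 4) ℂ) : (swapFactors P).trace = P.trace := by
  simp [Matrix.trace, Fin.sum_univ_four, swapFactors, Equiv.swap_apply_def]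
  ring

theorem trace_Cz_mul_swapFactors (p : ℝ) (P : Matrix (Fin 4) (Fin 4) ℂ) :
    (Cz p * swapFactors P).trace = (Cz p * P).trace := by
  simp [trace_Cz_mul, swapFactors, add_comm]

theorem IsCoupling_s10.swapFactors {α β : ℝ} {P : Matrix (Fin 4) (Fin 4) ℂ} (h : IsCoupling_s10 α β P) :
    IsCoupling_s10 β α (swapFactors P) :=
  ⟨h.posSemidef.submatrix _, (trace_swapFactors P).trans h.trace_eq_one,
    (ptrace2_swapFactors P).trans h.ptrace1_eq, (ptrace1_swapFactors P).trans h.ptrace2_eq⟩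

theorem le_re_trace_Cz_mul {α β : ℝ} (p : ℝ) {P : Matrix (Fin 4) (Fin 4) ℂ} (hP : P.PosSemidef)
    (h2 : ptrace2 P = qubitState β) (h1 : ptrace1 P = qubitState α) :
    (2:ℝ)^(p-1) * (1 - √(1 - max (α ^ 2) (β ^ 2))) ≤ ((Cz p * P).trace).re := by
  have h := one_sub_sqrt_one_sub_le (max_sq_le_of_marginals hP h2 h1)
  have h2p : 0 < (2:ℝ)^p := by positivity
  rw [trace_Cz_mul, Complex.re_ofReal_mul, Real.rpow_sub_one two_ne_zero]
  nlinarith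

theorem exists_isCoupling_of_abs_le (p : ℝ) {α β : ℝ} (hα : |α| ≤ 1) (hβα : |β| ≤ |α|) :
    ∃ P, IsCoupling_s10 α β P ∧ (Cz p * P).trace = ((2:ℝ)^(p-1) * (1 - √(1 - α ^ 2)) : ℝ) := by
  obtain ⟨a, b, hab, hα', hb⟩ := exists_sq_add_sq_eq_half hα
  have ht : |β / α| ≤ 1 := by
    rw [abs_div]
    exact div_le_one_of_le₀ hβα (abs_nonneg α)
  have hβ : β / α * α = β := by
    -- for α = 0 (hence β = 0), `β / 0 = 0` makes `couplingPlus` the diagonal coupling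
    rcases eq_or_ne α 0 with rfl | hα0
    · rw [abs_zero, abs_nonpos_iff] at hβα
      simp [hβα]
    · exact div_mul_cancel₀ β hα0
  refine ⟨couplingPlus a b (β / α), isCoupling_couplingPlus hab hα' hβ ht, ?_⟩
  rw [trace_Cz_mul_couplingPlus, Real.rpow_sub_one two_ne_zero, ← hb]
  ring_nf

theorem exists_isCoupling (p : ℝ) {α β : ℝ} (hα : |α| ≤ 1) (hβ : |β| ≤ 1) :
    ∃ P, IsCoupling_s10 α β P ∧
      (Cz p * P).trace = ((2:ℝ)^(p-1) * (1 - √(1 - max (α ^ 2) (β ^ 2))) : ℝ) := by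
  rcases le_total |β| |α| with h | h
  · rw [max_eq_left (sq_le_sq.mpr h)]
    exact exists_isCoupling_of_abs_le p hα h
  · obtain ⟨P, hP, hcost⟩ := exists_isCoupling_of_abs_le p hβ h
    rw [max_eq_right (sq_le_sq.mpr h)]
    exact ⟨swapFactors P, hP.swapFactors, (trace_Cz_mul_swapFactors p P).trans hcost⟩

theorem stmt_10_general (p : ℝ) (α β : ℝ) (hα₁ : -1 ≤ α) (hα₂ : α ≤ 1)
    (hβ₁ : -1 ≤ β) (hβ₂ : β ≤ 1) :
    IsLeast {x : ℝ | ∃ P : Matrix (Fin 4) (Fin 4) ℂ, P.PosSemidef ∧ P.trace = 1 ∧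
        ptrace2 P = (1/2 : ℂ) • !![1, (β : ℂ); (β : ℂ), 1] ∧
        ptrace1 P = (1/2 : ℂ) • !![1, (α : ℂ); (α : ℂ), 1] ∧
        (Cz p * P).trace = (x : ℂ)}
      ((2:ℝ)^(p-1) * (1 - Real.sqrt (1 - max (α^2) (β^2)))) := by
  constructor
  · obtain ⟨P, hP, hcost⟩ := exists_isCoupling p (abs_le.mpr ⟨hα₁, hα₂⟩) (abs_le.mpr ⟨hβ₁, hβ₂⟩)
    exact ⟨P, hP.posSemidef, hP.trace_eq_one, hP.ptrace2_eq, hP.ptrace1_eq, hcost⟩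
  · rintro x ⟨P, hP, -, h2, h1, hx⟩
    simpa [hx] using le_re_trace_Cz_mul p hP h2 h1

/-- the optimal transport cost for `C_{z,p}` between the states
`ρ(α) = (1/2)(I + ασ_x)` and `ρ(β)` equals `2^{p−1}(1 − √(1 − max(α²,β²)))`. -/
theorem stmt_10 (p : ℝ) (hp : 1 ≤ p) (α β : ℝ) (hα₁ : -1 ≤ α) (hα₂ : α ≤ 1)
    (hβ₁ : -1 ≤ β) (hβ₂ : β ≤ 1) :
    IsLeast {x : ℝ | ∃ P : Matrix (Fin 4) (Fin 4) ℂ, P.PosSemidef ∧ P.trace = 1 ∧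
        ptrace2 P = (1/2 : ℂ) • !![1, (β : ℂ); (β : ℂ), 1] ∧
        ptrace1 P = (1/2 : ℂ) • !![1, (α : ℂ); (α : ℂ), 1] ∧
        (Cz p * P).trace = (x : ℂ)}
      ((2:ℝ)^(p-1) * (1 - Real.sqrt (1 - max (α^2) (β^2)))) :=
  stmt_10_general p α β hα₁ hα₂ hβ₁ hβ₂
end
end

section
/- There exist states ρ, ω ∈ M₂(ℂ) (namely ρ = (1/2)(I + σ_z/2), ω = (1/2)(I − σ_z/2)) and p ≥ 1 such that the minimum of the linearized multi-marginal transport problem is strictly smaller than the minimum of the product-coupling problem: specifically, min over Π₁,Π₂,Π₃ ∈ C(ρ,ω) of ∑_{k=1}^3 tr(Π_k |σ_k⊗I − I⊗σ_kᵀ|^p) = 2^p − ((√3 − 1)/2)·2^p < 2^p = min over Π ∈ C(ρ,ω) of tr(Π ∑_{k=1}^3 |σ_k⊗I − I⊗σ_kᵀ|^p). -/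
open Matrix
open scoped ComplexOrder

noncomputable section

/-- `Π` is a coupling of `ρ` and `ω`. -/
def IsCoupling (P : Matrix (Fin 4) (Fin 4) ℂ) (ρ ω : Matrix (Fin 2) (Fin 2) ℂ) : Prop :=
  P.PosSemidef ∧ P.trace = 1 ∧ ptrace2 P = ω ∧ ptrace1 P = ρᵀ

/-!
Take `p = 1`, so that the costs are `I ⊗ I − σ_k ⊗ σ_kᵀ`. The marginal constraints force the
diagonal of a coupling `Π` of `ρ₀, ω₀` to be `(a, 1/4 − a, 3/4 − a, a)` with `0 ≤ a ≤ 1/4`, and its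
`2 × 2` principal minors bound the coherences: `Re Π₀₃ ≤ a` and
`|Re Π₁₂| ≤ √((1/4 − a)(3/4 − a)) ≤ √3/4 − a`. The `σx` and `σy` costs are then
`1 − 2 (Re Π₀₃ ± Re Π₁₂) ≥ 1 − √3/2` and the `σz` cost is `2 − 4a ≥ 1`; each bound is attained by
its own coupling (two pure states and a classical coupling), whereas a single coupling pays
`4 − 4a − 4 Re Π₀₃ ≥ 2` for the summed cost.
-/

theorem Matrix.IsHermitian.re_apply_comm {n : Type*} {A : Matrix n n ℂ} (hA : A.IsHermitian)
    (i j : n) : (A j i).re = (A i j).re := by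
  rw [← hA.apply i j, Complex.star_def, Complex.conj_re]

namespace Matrix.PosSemidef

variable {n : Type*} {A : Matrix n n ℂ}

theorem re_apply_nonneg (hA : A.PosSemidef) (i : n) : 0 ≤ (A i i).re :=
  (Complex.nonneg_iff.mp hA.diag_nonneg).1

theorem normSq_apply_le (hA : A.PosSemidef) (i j : n) :
    Complex.normSq (A i j) ≤ (A i i).re * (A j j).re := by
  have hdet := (hA.submatrix ![i, j]).det_nonneg
  rw [det_fin_two, Complex.nonneg_iff] at hdet
  have hji : A j i = star (A i j) := (hA.1.apply j i).symm
  have hii : (A i i).im = 0 := Complex.conj_eq_iff_im.mp (hA.1.apply i i)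
  simp only [submatrix_apply, cons_val_zero, cons_val_one, hji, Complex.star_def,
    Complex.mul_conj, Complex.sub_re, Complex.mul_re, hii, Complex.ofReal_re] at hdet
  linarith [hdet.1]

theorem re_apply_sq_le (hA : A.PosSemidef) (i j : n) :
    (A i j).re ^ 2 ≤ (A i i).re * (A j j).re :=
  calc (A i j).re ^ 2 ≤ Complex.normSq (A i j) := by
        rw [Complex.normSq_apply]; nlinarith [mul_self_nonneg (A i j).im]
    _ ≤ _ := hA.normSq_apply_le i j

end Matrix.PosSemidef

def ρ₀ : Matrix (Fin 2) (Fin 2) ℂ := (1/2 : ℂ) • ((1 : Matrix (Fin 2) (Fin 2) ℂ) + (1/2 : ℂ) • σz)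

def ω₀ : Matrix (Fin 2) (Fin 2) ℂ := (1/2 : ℂ) • ((1 : Matrix (Fin 2) (Fin 2) ℂ) - (1/2 : ℂ) • σz)

lemma kron_one_one_sub_kron_σx :
    kron 1 1 - kron σx σxᵀ = !![1, 0, 0, -1; 0, 1, -1, 0; 0, -1, 1, 0; -1, 0, 0, 1] := by
  ext i j; fin_cases i <;> fin_cases j <;> simp [kron, σx]

lemma kron_one_one_sub_kron_σy :
    kron 1 1 - kron σy σyᵀ = !![1, 0, 0, -1; 0, 1, 1, 0; 0, 1, 1, 0; -1, 0, 0, 1] := by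
  ext i j; fin_cases i <;> fin_cases j <;> simp [kron, σy]

lemma kron_one_one_sub_kron_σz :
    kron 1 1 - kron σz σzᵀ = !![0, 0, 0, 0; 0, 2, 0, 0; 0, 0, 2, 0; 0, 0, 0, 0] := by
  ext i j; fin_cases i <;> fin_cases j <;> norm_num [kron, σz]

section CostTraces

variable (P : Matrix (Fin 4) (Fin 4) ℂ)

lemma trace_mul_σx_cost :
    (P * (kron 1 1 - kron σx σxᵀ)).trace =
      P 0 0 + P 1 1 + P 2 2 + P 3 3 - (P 0 3 + P 3 0) - (P 1 2 + P 2 1) := by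
  simp only [kron_one_one_sub_kron_σx, trace, diag_apply, mul_apply, Fin.sum_univ_four, of_apply,
    cons_val', cons_val_zero, cons_val_one, cons_val, cons_val_fin_one]
  ring

lemma trace_mul_σy_cost :
    (P * (kron 1 1 - kron σy σyᵀ)).trace =
      P 0 0 + P 1 1 + P 2 2 + P 3 3 - (P 0 3 + P 3 0) + (P 1 2 + P 2 1) := by
  simp only [kron_one_one_sub_kron_σy, trace, diag_apply, mul_apply, Fin.sum_univ_four, of_apply,
    cons_val', cons_val_zero, cons_val_one, cons_val, cons_val_fin_one]
  ring

lemma trace_mul_σz_cost :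
    (P * (kron 1 1 - kron σz σzᵀ)).trace = 2 * (P 1 1 + P 2 2) := by
  simp only [kron_one_one_sub_kron_σz, trace, diag_apply, mul_apply, Fin.sum_univ_four, of_apply,
    cons_val', cons_val_zero, cons_val_one, cons_val, cons_val_fin_one]
  ring

end CostTraces

namespace IsCoupling

variable {P : Matrix (Fin 4) (Fin 4) ℂ}

lemma re_trace {ρ ω : Matrix (Fin 2) (Fin 2) ℂ} (hP : IsCoupling P ρ ω) :
    (P 0 0).re + (P 1 1).re + (P 2 2).re + (P 3 3).re = 1 := by
  simpa [trace, Fin.sum_univ_four] using congrArg Complex.re hP.2.1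

lemma re_diag_eq (hP : IsCoupling P ρ₀ ω₀) :
    (P 1 1).re = 1/4 - (P 0 0).re ∧ (P 2 2).re = 3/4 - (P 0 0).re ∧ (P 3 3).re = (P 0 0).re := by
  obtain ⟨-, -, hω, hρ⟩ := hP
  have hω₀₀ := congrArg Complex.re (congrFun (congrFun hω 0) 0)
  have hρ₀₀ := congrArg Complex.re (congrFun (congrFun hρ 0) 0)
  have hρ₁₁ := congrArg Complex.re (congrFun (congrFun hρ 1) 1)
  norm_num [ptrace1, ptrace2, ρ₀, ω₀, σz] at hω₀₀ hρ₀₀ hρ₁₁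
  exact ⟨by linarith, by linarith, by linarith⟩

lemma re_apply_zero_zero_mem_Icc (hP : IsCoupling P ρ₀ ω₀) : (P 0 0).re ∈ Set.Icc 0 (1/4) :=
  ⟨hP.1.re_apply_nonneg 0, by linarith [hP.re_diag_eq.1, hP.1.re_apply_nonneg 1]⟩

lemma re_apply_zero_three_le (hP : IsCoupling P ρ₀ ω₀) : (P 0 3).re ≤ (P 0 0).re := by
  have h := hP.1.re_apply_sq_le 0 3
  rw [hP.re_diag_eq.2.2, ← sq] at h
  exact (abs_le_of_sq_le_sq h (hP.1.re_apply_nonneg 0)).trans' (le_abs_self _)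

lemma abs_re_apply_one_two_le (hP : IsCoupling P ρ₀ ω₀) :
    |(P 1 2).re| ≤ √3 / 4 - (P 0 0).re := by
  obtain ⟨h₁₁, h₂₂, -⟩ := hP.re_diag_eq
  obtain ⟨ha, ha'⟩ := hP.re_apply_zero_zero_mem_Icc
  have h := hP.1.re_apply_sq_le 1 2
  have hsqrt : (1 : ℝ) ≤ √3 := Real.one_le_sqrt.mpr (by norm_num)
  have hsq : √3 ^ 2 = 3 := Real.sq_sqrt (by norm_num)
  apply abs_le_of_sq_le_sq _ (by linarith)
  rw [h₁₁, h₂₂] at h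
  -- `(1/4 − a)(3/4 − a) ≤ (√3/4 − a)²` reduces to `(√3/2 − 1) a ≤ 0`
  nlinarith

lemma re_trace_mul_σx_cost (hP : IsCoupling P ρ₀ ω₀) :
    (P * (kron 1 1 - kron σx σxᵀ)).trace.re = 1 - 2 * ((P 0 3).re + (P 1 2).re) := by
  simp only [trace_mul_σx_cost, Complex.add_re, Complex.sub_re, hP.1.1.re_apply_comm 0 3,
    hP.1.1.re_apply_comm 1 2]
  linarith [hP.re_trace]

lemma re_trace_mul_σy_cost (hP : IsCoupling P ρ₀ ω₀) :
    (P * (kron 1 1 - kron σy σyᵀ)).trace.re = 1 - 2 * ((P 0 3).re - (P 1 2).re) := by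
  simp only [trace_mul_σy_cost, Complex.add_re, Complex.sub_re, hP.1.1.re_apply_comm 0 3,
    hP.1.1.re_apply_comm 1 2]
  linarith [hP.re_trace]

lemma re_trace_mul_σz_cost (hP : IsCoupling P ρ₀ ω₀) :
    (P * (kron 1 1 - kron σz σzᵀ)).trace.re = 2 - 4 * (P 0 0).re := by
  simp only [trace_mul_σz_cost, Complex.mul_re, Complex.re_ofNat, Complex.im_ofNat,
    Complex.add_re, zero_mul, sub_zero]
  linarith [hP.re_diag_eq.1, hP.re_diag_eq.2.1]

lemma le_re_trace_mul_σx_cost (hP : IsCoupling P ρ₀ ω₀) :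
    1 - √3 / 2 ≤ (P * (kron 1 1 - kron σx σxᵀ)).trace.re := by
  rw [hP.re_trace_mul_σx_cost]
  linarith [hP.re_apply_zero_three_le, le_abs_self (P 1 2).re, hP.abs_re_apply_one_two_le]

lemma le_re_trace_mul_σy_cost (hP : IsCoupling P ρ₀ ω₀) :
    1 - √3 / 2 ≤ (P * (kron 1 1 - kron σy σyᵀ)).trace.re := by
  rw [hP.re_trace_mul_σy_cost]
  linarith [hP.re_apply_zero_three_le, neg_abs_le (P 1 2).re, hP.abs_re_apply_one_two_le]

lemma one_le_re_trace_mul_σz_cost (hP : IsCoupling P ρ₀ ω₀) :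
    1 ≤ (P * (kron 1 1 - kron σz σzᵀ)).trace.re := by
  rw [hP.re_trace_mul_σz_cost]
  linarith [hP.re_apply_zero_zero_mem_Icc.2]

lemma two_le_re_trace_mul_sum_cost (hP : IsCoupling P ρ₀ ω₀) :
    2 ≤ (P * ((kron 1 1 - kron σx σxᵀ) + (kron 1 1 - kron σy σyᵀ) +
      (kron 1 1 - kron σz σzᵀ))).trace.re := by
  rw [Matrix.mul_add, Matrix.mul_add, trace_add, trace_add, Complex.add_re, Complex.add_re,
    hP.re_trace_mul_σx_cost, hP.re_trace_mul_σy_cost, hP.re_trace_mul_σz_cost]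
  linarith [hP.re_apply_zero_three_le, hP.re_apply_zero_zero_mem_Icc.2]

end IsCoupling

lemma Complex.ofReal_sqrt_three_sq : (√3 : ℂ) ^ 2 = 3 := by
  exact_mod_cast Real.sq_sqrt (by norm_num : (0:ℝ) ≤ 3)

def couplingX : Matrix (Fin 4) (Fin 4) ℂ :=
  !![0, 0, 0, 0; 0, 1/4, √3/4, 0; 0, √3/4, 3/4, 0; 0, 0, 0, 0]

def couplingY : Matrix (Fin 4) (Fin 4) ℂ :=
  !![0, 0, 0, 0; 0, 1/4, -√3/4, 0; 0, -√3/4, 3/4, 0; 0, 0, 0, 0]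

def couplingZ : Matrix (Fin 4) (Fin 4) ℂ :=
  !![1/4, 0, 0, 1/4; 0, 0, 0, 0; 0, 0, 1/2, 0; 1/4, 0, 0, 1/4]

lemma couplingX_eq_vecMulVec :
    couplingX = vecMulVec (![0, 1/2, √3/2, 0] : Fin 4 → ℂ) (star ![0, 1/2, √3/2, 0]) := by
  ext i j
  fin_cases i <;> fin_cases j <;> simp [couplingX, vecMulVec, Complex.conj_ofReal, map_ofNat]
  all_goals first | ring1 | linear_combination (-1/4 : ℂ) * Complex.ofReal_sqrt_three_sq

lemma couplingY_eq_vecMulVec :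
    couplingY = vecMulVec (![0, 1/2, -√3/2, 0] : Fin 4 → ℂ) (star ![0, 1/2, -√3/2, 0]) := by
  ext i j
  fin_cases i <;> fin_cases j <;> simp [couplingY, vecMulVec, Complex.conj_ofReal, map_ofNat]
  all_goals first | ring1 | linear_combination (-1/4 : ℂ) * Complex.ofReal_sqrt_three_sq

lemma couplingZ_eq_vecMulVec_add_diagonal :
    couplingZ = vecMulVec (![1/2, 0, 0, 1/2] : Fin 4 → ℂ) (star ![1/2, 0, 0, 1/2]) +
      diagonal ![0, 0, 1/2, 0] := by
  ext i j; fin_cases i <;> fin_cases j <;> simp [couplingZ, vecMulVec, map_ofNat] <;> norm_num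

lemma couplingX_isCoupling : IsCoupling couplingX ρ₀ ω₀ := by
  refine ⟨couplingX_eq_vecMulVec ▸ posSemidef_vecMulVec_self_star _, ?_, ?_, ?_⟩ <;>
    simp only [couplingX, trace, diag_apply, Fin.sum_univ_four, ptrace1, ptrace2, of_apply,
      cons_val', cons_val_zero, cons_val_one, cons_val, cons_val_fin_one]
  · norm_num
  all_goals ext i j; fin_cases i <;> fin_cases j <;> norm_num [ρ₀, ω₀, σz]

lemma couplingY_isCoupling : IsCoupling couplingY ρ₀ ω₀ := by
  refine ⟨couplingY_eq_vecMulVec ▸ posSemidef_vecMulVec_self_star _, ?_, ?_, ?_⟩ <;>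
    simp only [couplingY, trace, diag_apply, Fin.sum_univ_four, ptrace1, ptrace2, of_apply,
      cons_val', cons_val_zero, cons_val_one, cons_val, cons_val_fin_one]
  · norm_num
  all_goals ext i j; fin_cases i <;> fin_cases j <;> norm_num [ρ₀, ω₀, σz]

lemma couplingZ_isCoupling : IsCoupling couplingZ ρ₀ ω₀ := by
  refine ⟨couplingZ_eq_vecMulVec_add_diagonal ▸
    (posSemidef_vecMulVec_self_star _).add (.diagonal ?_), ?_, ?_, ?_⟩
  · intro i; fin_cases i <;> simp
  all_goals simp only [couplingZ, trace, diag_apply, Fin.sum_univ_four, ptrace1, ptrace2, of_apply,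
      cons_val', cons_val_zero, cons_val_one, cons_val, cons_val_fin_one]
  · norm_num
  all_goals ext i j; fin_cases i <;> fin_cases j <;> norm_num [ρ₀, ω₀, σz]

lemma trace_couplingX_mul_σx_cost :
    (couplingX * (kron 1 1 - kron σx σxᵀ)).trace = 1 - √3 / 2 := by
  simp only [trace_mul_σx_cost, couplingX, of_apply, cons_val', cons_val_zero, cons_val_one,
    cons_val, cons_val_fin_one]
  ring

lemma trace_couplingY_mul_σy_cost :
    (couplingY * (kron 1 1 - kron σy σyᵀ)).trace = 1 - √3 / 2 := by
  simp only [trace_mul_σy_cost, couplingY, of_apply, cons_val', cons_val_zero, cons_val_one,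
    cons_val, cons_val_fin_one]
  ring

lemma trace_couplingZ_mul_σz_cost :
    (couplingZ * (kron 1 1 - kron σz σzᵀ)).trace = 1 := by
  simp only [trace_mul_σz_cost, couplingZ, of_apply, cons_val', cons_val_zero, cons_val_one,
    cons_val, cons_val_fin_one]
  norm_num

lemma trace_couplingZ_mul_sum_cost :
    (couplingZ * ((kron 1 1 - kron σx σxᵀ) + (kron 1 1 - kron σy σyᵀ) +
      (kron 1 1 - kron σz σzᵀ))).trace = 2 := by
  simp only [Matrix.mul_add, trace_add, trace_mul_σx_cost, trace_mul_σy_cost, trace_mul_σz_cost,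
    couplingZ, of_apply, cons_val', cons_val_zero, cons_val_one, cons_val, cons_val_fin_one]
  norm_num

/-- for `ρ = (1/2)(I + σ_z/2)`, `ω = (1/2)(I − σ_z/2)` and some `p ≥ 1`,
the linearized multi-marginal transport problem has a strictly smaller minimum than the
product-coupling problem; here `|σ_k ⊗ I − I ⊗ σ_kᵀ|^p = 2^{p−1}(I⊗I − σ_k ⊗ σ_kᵀ)`. -/
theorem stmt_18 :
    ∃ p : ℝ, 1 ≤ p ∧
      ∀ ρ ω : Matrix (Fin 2) (Fin 2) ℂ,
        ρ = (1/2 : ℂ) • ((1 : Matrix (Fin 2) (Fin 2) ℂ) + (1/2 : ℂ) • σz) →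
        ω = (1/2 : ℂ) • ((1 : Matrix (Fin 2) (Fin 2) ℂ) - (1/2 : ℂ) • σz) →
        ∀ c₁ c₂ c₃ : Matrix (Fin 4) (Fin 4) ℂ,
          c₁ = (((2:ℝ)^(p-1) : ℝ) : ℂ) • (kron 1 1 - kron σx σxᵀ) →
          c₂ = (((2:ℝ)^(p-1) : ℝ) : ℂ) • (kron 1 1 - kron σy σyᵀ) →
          c₃ = (((2:ℝ)^(p-1) : ℝ) : ℂ) • (kron 1 1 - kron σz σzᵀ) →
          IsLeast {x : ℝ | ∃ P₁ P₂ P₃ : Matrix (Fin 4) (Fin 4) ℂ,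
              IsCoupling P₁ ρ ω ∧ IsCoupling P₂ ρ ω ∧ IsCoupling P₃ ρ ω ∧
              (P₁ * c₁).trace + (P₂ * c₂).trace + (P₃ * c₃).trace = (x : ℂ)}
            ((2:ℝ)^p - ((Real.sqrt 3 - 1)/2) * (2:ℝ)^p) ∧
          IsLeast {x : ℝ | ∃ P : Matrix (Fin 4) (Fin 4) ℂ,
              IsCoupling P ρ ω ∧ (P * (c₁ + c₂ + c₃)).trace = (x : ℂ)}
            ((2:ℝ)^p) ∧
          (2:ℝ)^p - ((Real.sqrt 3 - 1)/2) * (2:ℝ)^p < (2:ℝ)^p := by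
  refine ⟨1, le_rfl, ?_⟩
  rintro ρ ω rfl rfl c₁ c₂ c₃ rfl rfl rfl
  simp only [sub_self, Real.rpow_zero, Real.rpow_one, Complex.ofReal_one, one_smul]
  refine ⟨⟨⟨couplingX, couplingY, couplingZ, couplingX_isCoupling, couplingY_isCoupling,
    couplingZ_isCoupling, ?_⟩, ?_⟩, ⟨⟨couplingZ, couplingZ_isCoupling, ?_⟩, ?_⟩, ?_⟩
  · rw [trace_couplingX_mul_σx_cost, trace_couplingY_mul_σy_cost, trace_couplingZ_mul_σz_cost]
    push_cast; ring
  · rintro x ⟨P₁, P₂, P₃, h₁, h₂, h₃, hx⟩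
    have hx_re := congrArg Complex.re hx
    simp only [Complex.add_re, Complex.ofReal_re] at hx_re
    linarith [h₁.le_re_trace_mul_σx_cost, h₂.le_re_trace_mul_σy_cost,
      h₃.one_le_re_trace_mul_σz_cost]
  · rw [trace_couplingZ_mul_sum_cost]; push_cast; ring
  · rintro x ⟨P, hP, hx⟩
    have := hP.two_le_re_trace_mul_sum_cost
    rwa [hx, Complex.ofReal_re] at this
  · linarith [Real.lt_sqrt_of_sq_lt (by norm_num : (1 : ℝ) ^ 2 < 3)]
end
end
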